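/- For n = 2, write A_t ∈ SO(2,ℝ) as the rotation by angle θ_t ∈ (−π/2, π/2). Then one step of the MSP iteration A_{t+1} = P_{SO(2)}(A_t^{∘3}) (projection of the entrywise cube onto SO(2) via the polar factor) gives a rotation by angle θ_{t+1} satisfying tan θ_{t+1} = tan³ θ_t. -/

import Mathlib

open Matrix Real

/-- Rotation of the plane by angle `θ`. -/
noncomputable def rot (θ : ℝ) : Matrix (Fin 2) (Fin 2) ℝ :=
  !![Real.cos θ, -Real.sin θ; Real.sin θ, Real.cos θ]

/-- Entrywise cube of a matrix. -/
def cube (W : Matrix (Fin 2) (Fin 2) ℝ) : Matrix (Fin 2) (Fin 2) ℝ :=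
  fun i j => W i j ^ 3

/-- The squared Frobenius norm of a matrix. -/
def frobSq (A : Matrix (Fin 2) (Fin 2) ℝ) : ℝ :=
  ∑ i, ∑ j, A i j ^ 2

/-!
Since `‖rot α‖² = 2`, the Frobenius distance from `rot α` to `C = (rot θ)^{∘3}` is, up to
a constant, `-4 (cos³θ · cos α + sin³θ · sin α)`. A minimizing angle `ψ` is therefore a
critical point of `α ↦ cos³θ · cos α + sin³θ · sin α`, i.e. `cos³θ · sin ψ = sin³θ · cos ψ`,
which is `tan ψ = tan³ θ` as soon as `cos θ ≠ 0`.
-/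

lemma rot_transpose_mul_self (α : ℝ) : (rot α)ᵀ * rot α = 1 := by
  ext i j
  fin_cases i <;> fin_cases j <;>
    simp [rot, Matrix.mul_apply, Fin.sum_univ_two] <;>
    nlinarith [sin_sq_add_cos_sq α]

lemma det_rot (α : ℝ) : (rot α).det = 1 := by
  simp [rot, Matrix.det_fin_two, ← sq]

lemma frobSq_rot_sub (α : ℝ) (M : Matrix (Fin 2) (Fin 2) ℝ) :
    frobSq (rot α - M) =
      2 + frobSq M - 2 * ((M 0 0 + M 1 1) * cos α + (M 1 0 - M 0 1) * sin α) := by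
  simp only [frobSq, rot, Fin.sum_univ_two, Matrix.sub_apply, of_apply, cons_val', cons_val_zero,
    cons_val_one, empty_val', cons_val_fin_one]
  linear_combination 2 * sin_sq_add_cos_sq α

lemma mul_sin_eq_mul_cos_of_isLocalMax {a b ψ : ℝ}
    (h : IsLocalMax (fun α => a * cos α + b * sin α) ψ) : a * sin ψ = b * cos ψ := by
  have hd : HasDerivAt (fun α => a * cos α + b * sin α) (a * -sin ψ + b * cos ψ) ψ :=
    ((hasDerivAt_cos ψ).const_mul a).add ((hasDerivAt_sin ψ).const_mul b)
  linarith [h.hasDerivAt_eq_zero hd]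

lemma tan_eq_div_of_isLocalMax {a b ψ : ℝ} (ha : a ≠ 0)
    (h : IsLocalMax (fun α => a * cos α + b * sin α) ψ) : tan ψ = b / a := by
  have hcrit := mul_sin_eq_mul_cos_of_isLocalMax h
  have hcos : cos ψ ≠ 0 := by
    intro hc
    have hs : sin ψ = 0 := by simpa [hc, ha] using hcrit
    simpa [hs, hc] using sin_sq_add_cos_sq ψ
  rw [tan_eq_sin_div_cos, div_eq_div_iff hcos ha]
  linarith

/-- One step of the MSP iteration on `SO(2;ℝ)`: if `A_t` is the rotation by
`θ ∈ (-π/2, π/2)` and the rotation by `ψ` is the projection of `A_t^{∘3}` onto `SO(2)`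
(the minimizer of the Frobenius distance among special orthogonal matrices), then
`tan ψ = tan³ θ`. -/
theorem msp_so2_tan_cube (θ ψ : ℝ)
    (hθ : θ ∈ Set.Ioo (-(π / 2)) (π / 2))
    (hmin : ∀ M : Matrix (Fin 2) (Fin 2) ℝ, Mᵀ * M = 1 → M.det = 1 →
      frobSq (rot ψ - cube (rot θ)) ≤ frobSq (M - cube (rot θ))) :
    Real.tan ψ = Real.tan θ ^ 3 := by
  have hcos : cos θ ≠ 0 := (cos_pos_of_mem_Ioo hθ).ne'
  have hmax : IsLocalMax (fun α => cos θ ^ 3 * cos α + sin θ ^ 3 * sin α) ψ :=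
    Filter.Eventually.of_forall fun α => by
      have h := hmin (rot α) (rot_transpose_mul_self α) (det_rot α)
      rw [frobSq_rot_sub, frobSq_rot_sub] at h
      simp only [cube, rot, of_apply, cons_val', cons_val_zero, cons_val_one, empty_val',
        cons_val_fin_one] at h
      linarith
  rw [tan_eq_div_of_isLocalMax (pow_ne_zero 3 hcos) hmax, tan_eq_sin_div_cos, div_pow]
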